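/- arXiv:2305.04494 — 3 statements merged into one kernel-verified Lean document; each statement's English description precedes it below -/
import Mathlib

section
/- Let 0 ≤ θ < π/2, let A and B be n×n complex matrices in the sector class S_θ, let 0 < m ≤ M with mI ≤ ℜA ≤ MI and mI ≤ ℜB ≤ MI, let v ∈ [0,1], and let Φ be a positive unital linear map on M_n(ℂ). Then ℜ(Φ(A∇_vB)) ≤ sec²θ · K · ℜ(Φ(A!_vB)) in the Loewner order, where K = (M+m)²/(4mM). (This is the case p = 1, σ₁ = ∇_v, σ₂ = !_v of the paper's Theorem on powers of positive unital maps of means.) -/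
open Matrix
open scoped ComplexOrder

/-- The real part `(A + Aᴴ)/2` of a complex matrix. -/
noncomputable def matRe {n : ℕ} (A : Matrix (Fin n) (Fin n) ℂ) : Matrix (Fin n) (Fin n) ℂ :=
  (2⁻¹ : ℂ) • (A + Aᴴ)

/-- The imaginary part `(A - Aᴴ)/(2i)` of a complex matrix. -/
noncomputable def matIm {n : ℕ} (A : Matrix (Fin n) (Fin n) ℂ) : Matrix (Fin n) (Fin n) ℂ :=
  (2 * Complex.I)⁻¹ • (A - Aᴴ)

/-- Loewner order: `Y - X` is positive semidefinite. -/
def loewnerLE {n : ℕ} (X Y : Matrix (Fin n) (Fin n) ℂ) : Prop := (Y - X).PosSemidef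

/-- `A` lies in the sector class `S_θ`: its real part is positive definite and for all `x`,
`|⟨(ℑA)x, x⟩| ≤ tan θ · ⟨(ℜA)x, x⟩`. -/
def sectorClass {n : ℕ} (θ : ℝ) (A : Matrix (Fin n) (Fin n) ℂ) : Prop :=
  (matRe A).PosDef ∧
    ∀ x : Fin n → ℂ,
      |(star x ⬝ᵥ (matIm A).mulVec x).re| ≤ Real.tan θ * (star x ⬝ᵥ (matRe A).mulVec x).re

/-- The `v`-weighted arithmetic mean `A ∇_v B = v A + (1 - v) B`. -/
noncomputable def amean {n : ℕ} (v : ℝ) (A B : Matrix (Fin n) (Fin n) ℂ) :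
    Matrix (Fin n) (Fin n) ℂ :=
  (v : ℂ) • A + ((1 - v : ℝ) : ℂ) • B

/-- The `v`-weighted harmonic mean `A !_v B = (v A⁻¹ + (1 - v) B⁻¹)⁻¹`. -/
noncomputable def hmean {n : ℕ} (v : ℝ) (A B : Matrix (Fin n) (Fin n) ℂ) :
    Matrix (Fin n) (Fin n) ℂ :=
  ((v : ℂ) • A⁻¹ + ((1 - v : ℝ) : ℂ) • B⁻¹)⁻¹

/-- A linear map on matrices is positive and unital. -/
def IsPosUnitalMap {n : ℕ}
    (Φ : Matrix (Fin n) (Fin n) ℂ →ₗ[ℂ] Matrix (Fin n) (Fin n) ℂ) : Prop :=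
  Φ 1 = 1 ∧ ∀ X : Matrix (Fin n) (Fin n) ℂ, X.PosSemidef → (Φ X).PosSemidef

/-- The numerical radius `ω(A) = sup { |⟨Ax, x⟩| : ‖x‖ = 1 }` (ℓ² norm). -/
noncomputable def numRadius {n : ℕ} (A : Matrix (Fin n) (Fin n) ℂ) : ℝ :=
  sSup {r : ℝ | ∃ x : EuclideanSpace ℂ (Fin n), ‖x‖ = 1 ∧
    r = ‖star (x : Fin n → ℂ) ⬝ᵥ A.mulVec (x : Fin n → ℂ)‖}

/-- The spectral norm (ℓ² → ℓ² operator norm) of a matrix. -/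
noncomputable def matSpectralNorm {n : ℕ} (A : Matrix (Fin n) (Fin n) ℂ) : ℝ :=
  ‖Matrix.toEuclideanCLM (𝕜 := ℂ) A‖

/-!
Put `C = v A⁻¹ + (1 - v) B⁻¹`, so that `A !_v B = C⁻¹`. For `T ∈ S_θ` the identity
`T (ℜT)⁻¹ T* = ℜT + ℑT (ℜT)⁻¹ ℑT`, together with `ℑT (ℜT)⁻¹ ℑT ≤ tan²θ ℜT` (conjugate the sector
condition `-tan θ ℜT ≤ ℑT ≤ tan θ ℜT` by `(ℜT)^(-1/2)`), gives `ℜ(T⁻¹) ≤ (ℜT)⁻¹ ≤ sec²θ ℜ(T⁻¹)`.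
As `S_θ` is closed under inverses and convex combinations, `C ∈ S_θ`, and
`ℜ(A ∇_v B) ≤ K (v (ℜA)⁻¹ + (1 - v) (ℜB)⁻¹)⁻¹ ≤ K (ℜC)⁻¹ ≤ K sec²θ ℜ(C⁻¹)`:
the first step is Kantorovich's inequality between the arithmetic and harmonic means of `ℜA` and
`ℜB`, the second uses `ℜC ≤ v (ℜA)⁻¹ + (1 - v) (ℜB)⁻¹` and that inversion is order reversing.
A positive linear map commutes with `ℜ` and preserves the Loewner order.
-/

open scoped Ring MatrixOrder Matrix.Norms.L2Operator

namespace CStarAlgebra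

variable {A : Type*} [CStarAlgebra A] [PartialOrder A] [StarOrderedRing A]

lemma spectrum_subset_Icc {a : A} {m M : ℝ} (ha : IsSelfAdjoint a)
    (hma : algebraMap ℝ A m ≤ a) (haM : a ≤ algebraMap ℝ A M) :
    spectrum ℝ a ⊆ Set.Icc m M := fun x hx =>
  ⟨(algebraMap_le_iff_le_spectrum (a := a)).mp hma x hx,
    (le_algebraMap_iff_spectrum_le (a := a)).mp haM x hx⟩

lemma isStrictlyPositive_smul_add_smul {a b : A} (ha : IsStrictlyPositive a)
    (hb : IsStrictlyPositive b) {v : ℝ} (hv0 : 0 ≤ v) (hv1 : v ≤ 1) :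
    IsStrictlyPositive (v • a + (1 - v) • b) := by
  rcases hv0.eq_or_lt with rfl | hv
  · simpa using hb
  · exact (ha.smul hv).add_nonneg (smul_nonneg (sub_nonneg.mpr hv1) hb.nonneg)

lemma mul_self_le_algebraMap_sq {a : A} {t : ℝ}
    (h₁ : -algebraMap ℝ A t ≤ a) (h₂ : a ≤ algebraMap ℝ A t) :
    a * a ≤ algebraMap ℝ A (t ^ 2) := by
  rw [← map_neg] at h₁
  have ha : IsSelfAdjoint a := IsSelfAdjoint.of_le h₂ (.algebraMap A (.all t))
  have hspec := spectrum_subset_Icc ha h₁ h₂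
  rw [← cfc_id' ℝ a, ← cfc_mul ..]
  refine cfc_le_algebraMap _ _ a fun x hx => ?_
  obtain ⟨hlo, hhi⟩ := hspec hx
  nlinarith

lemma mul_inverse_mul_le_sq_smul {r s : A} (hr : IsStrictlyPositive r) {t : ℝ}
    (h₁ : -(t • r) ≤ s) (h₂ : s ≤ t • r) :
    s * r⁻¹ʳ * s ≤ t ^ 2 • r := by
  set q := CFC.sqrt r
  have hq : IsStrictlyPositive q := hr.sqrt
  have hqq : q * q = r := CFC.sqrt_mul_sqrt_self r
  set c := q⁻¹ʳ
  have hc : star c = c := by rw [← Ring.inverse_star, hq.isSelfAdjoint.star_eq]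
  have hcq : c * q = 1 := Ring.inverse_mul_cancel q hq.isUnit
  have hqc : q * c = 1 := Ring.mul_inverse_cancel q hq.isUnit
  have hcrc : c * (t • r) * c = algebraMap ℝ A t := by
    rw [mul_smul_comm, smul_mul_assoc, ← hqq, ← mul_assoc, hcq, one_mul, hqc,
      Algebra.algebraMap_eq_smul_one]
  have k₁ := star_left_conjugate_le_conjugate h₁ c
  have k₂ := star_left_conjugate_le_conjugate h₂ c
  rw [hc, mul_neg, neg_mul, hcrc] at k₁
  rw [hc, hcrc] at k₂
  have key := star_left_conjugate_le_conjugate (mul_self_le_algebraMap_sq k₁ k₂) q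
  rw [hq.isSelfAdjoint.star_eq, Algebra.algebraMap_eq_smul_one, mul_smul_comm, smul_mul_assoc,
    mul_one, hqq] at key
  convert key using 1
  rw [← hqq, Ring.inverse_mul (Or.inl hq.isUnit)]
  calc s * (c * c) * s = (q * c) * s * c * (c * s * (c * q)) := by rw [hqc, hcq]; noncomm_ring
    _ = _ := by noncomm_ring

lemma cfc_mul_add_mul_inv {a : A} (ha : IsStrictlyPositive a) (c d : ℝ) :
    cfc (fun x : ℝ => c * x + d * x⁻¹) a = c • a + d • a⁻¹ʳ := by
  have h0 : ∀ x ∈ spectrum ℝ a, x ≠ 0 := fun x hx => (ha.spectrum_pos hx).ne'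
  rw [cfc_add .., cfc_const_mul .., cfc_const_mul .., cfc_id' ..,
    cfc_ringInverse_id _ ha.isUnit]

lemma add_smul_inverse_le {a : A} {m M : ℝ} (hm : 0 < m)
    (hma : algebraMap ℝ A m ≤ a) (haM : a ≤ algebraMap ℝ A M) :
    a + (m * M) • a⁻¹ʳ ≤ algebraMap ℝ A (m + M) := by
  have ha : IsStrictlyPositive a := (isStrictlyPositive_algebraMap hm).of_le hma
  have h0 : ∀ x ∈ spectrum ℝ a, x ≠ 0 := fun x hx => (ha.spectrum_pos hx).ne'
  have key := cfc_mul_add_mul_inv ha 1 (m * M)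
  rw [one_smul] at key
  rw [← key]
  refine cfc_le_algebraMap _ _ a fun x hx => ?_
  obtain ⟨hmx, hxM⟩ := spectrum_subset_Icc ha.isSelfAdjoint hma haM hx
  have hx : 0 < x := hm.trans_le hmx
  rw [← sub_nonneg, show m + M - (1 * x + m * M * x⁻¹) = (x - m) * (M - x) / x by
    field_simp; ring]
  exact div_nonneg (mul_nonneg (sub_nonneg.mpr hmx) (sub_nonneg.mpr hxM)) hx.le

lemma algebraMap_le_smul_add_smul_inverse {a : A} (ha : IsStrictlyPositive a) {m M : ℝ}
    (hm : 0 < m) (hM : 0 < M) :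
    algebraMap ℝ A (m + M) ≤ ((M + m) ^ 2 / (4 * m * M)) • a + (m * M) • a⁻¹ʳ := by
  have h0 : ∀ x ∈ spectrum ℝ a, x ≠ 0 := fun x hx => (ha.spectrum_pos hx).ne'
  rw [← cfc_mul_add_mul_inv ha]
  refine algebraMap_le_cfc _ _ a fun x hx => ?_
  have hx := ha.spectrum_pos hx
  rw [← sub_nonneg, show (M + m) ^ 2 / (4 * m * M) * x + m * M * x⁻¹ - (m + M)
    = ((M + m) * x - 2 * m * M) ^ 2 / (4 * m * M * x) by field_simp; ring]
  positivity

theorem smul_add_smul_le_kantorovich_smul_inverse {a b : A} {m M v : ℝ} (hm : 0 < m)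
    (hmM : m ≤ M) (hma : algebraMap ℝ A m ≤ a) (haM : a ≤ algebraMap ℝ A M)
    (hmb : algebraMap ℝ A m ≤ b) (hbM : b ≤ algebraMap ℝ A M) (hv0 : 0 ≤ v) (hv1 : v ≤ 1) :
    v • a + (1 - v) • b ≤ ((M + m) ^ 2 / (4 * m * M)) • (v • a⁻¹ʳ + (1 - v) • b⁻¹ʳ)⁻¹ʳ := by
  have ha : IsStrictlyPositive a := (isStrictlyPositive_algebraMap hm).of_le hma
  have hb : IsStrictlyPositive b := (isStrictlyPositive_algebraMap hm).of_le hmb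
  set w := v • a⁻¹ʳ + (1 - v) • b⁻¹ʳ
  have hw : IsStrictlyPositive w :=
    isStrictlyPositive_smul_add_smul ha.ringInverse hb.ringInverse hv0 hv1
  have h₁ : v • a + (1 - v) • b + (m * M) • w ≤ algebraMap ℝ A (m + M) := by
    have := add_le_add (smul_le_smul_of_nonneg_left (add_smul_inverse_le hm hma haM) hv0)
      (smul_le_smul_of_nonneg_left (add_smul_inverse_le hm hmb hbM) (sub_nonneg.mpr hv1))
    convert this using 1
    · simp only [w, smul_add, smul_comm v (m * M), smul_comm (1 - v) (m * M)]
      abel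
    · rw [← add_smul, add_sub_cancel, one_smul]
  have h₂ := algebraMap_le_smul_add_smul_inverse hw.ringInverse hm (hm.trans_le hmM)
  rw [Ring.inverse_inverse hw.isUnit] at h₂
  calc v • a + (1 - v) • b ≤ algebraMap ℝ A (m + M) - (m * M) • w := le_sub_iff_add_le.mpr h₁
    _ ≤ _ := sub_le_iff_le_add.mpr h₂

end CStarAlgebra

lemma LinearMap.map_star_of_map_nonneg {A B : Type*} [CStarAlgebra A] [PartialOrder A]
    [StarOrderedRing A] [CStarAlgebra B] [PartialOrder B] [StarOrderedRing B]
    (f : A →ₗ[ℂ] B) (hf : ∀ a, 0 ≤ a → 0 ≤ f a) (a : A) : f (star a) = star (f a) := by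
  have hsa : ∀ x : A, IsSelfAdjoint x → IsSelfAdjoint (f x) := fun x hx => by
    rw [← CFC.posPart_sub_negPart x hx, map_sub]
    exact (hf _ (CFC.posPart_nonneg x)).isSelfAdjoint.sub
      (hf _ (CFC.negPart_nonneg x)).isSelfAdjoint
  obtain ⟨x, y, hx, hy, rfl⟩ :
      ∃ x y : A, IsSelfAdjoint x ∧ IsSelfAdjoint y ∧ a = x + Complex.I • y :=
    ⟨realPart a, imaginaryPart a, (realPart a).2, (imaginaryPart a).2,
      (realPart_add_I_smul_imaginaryPart a).symm⟩
  simp only [star_add, star_smul, hx.star_eq, hy.star_eq, map_add, map_smul, (hsa x hx).star_eq,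
    (hsa y hy).star_eq, Complex.star_def, Complex.conj_I, neg_smul, map_neg]

lemma Matrix.IsHermitian.posSemidef_iff_re_nonneg {ι : Type*} [Fintype ι] {X : Matrix ι ι ℂ}
    (hX : X.IsHermitian) : X.PosSemidef ↔ ∀ x : ι → ℂ, 0 ≤ (star x ⬝ᵥ X *ᵥ x).re := by
  rw [posSemidef_iff_dotProduct_mulVec, and_iff_right hX]
  refine forall_congr' fun x => ?_
  exact and_iff_left (hX.im_star_dotProduct_mulVec_self x).symm

section SectorClass

variable {n : ℕ} {θ : ℝ}

lemma matRe_isHermitian (T : Matrix (Fin n) (Fin n) ℂ) : (matRe T).IsHermitian := by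
  simp [Matrix.IsHermitian, matRe, add_comm]

lemma matIm_isHermitian (T : Matrix (Fin n) (Fin n) ℂ) : (matIm T).IsHermitian := by
  rw [Matrix.IsHermitian, matIm, conjTranspose_smul, conjTranspose_sub,
    conjTranspose_conjTranspose,
    show star (2 * Complex.I)⁻¹ = -(2 * Complex.I)⁻¹ by simp [mul_comm], neg_smul, ← smul_neg,
    neg_sub]

lemma matRe_add_I_smul_matIm (T : Matrix (Fin n) (Fin n) ℂ) :
    matRe T + Complex.I • matIm T = T := by
  rw [matRe, matIm, smul_smul, show Complex.I * (2 * Complex.I)⁻¹ = 2⁻¹ by field_simp]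
  module

lemma matRe_sub_I_smul_matIm (T : Matrix (Fin n) (Fin n) ℂ) :
    matRe T - Complex.I • matIm T = Tᴴ := by
  rw [matRe, matIm, smul_smul, show Complex.I * (2 * Complex.I)⁻¹ = 2⁻¹ by field_simp]
  module

lemma amean_eq_smul_add_smul (v : ℝ) (A B : Matrix (Fin n) (Fin n) ℂ) :
    amean v A B = v • A + (1 - v) • B := by
  rw [amean, Complex.coe_smul, Complex.coe_smul]

lemma matRe_amean (v : ℝ) (A B : Matrix (Fin n) (Fin n) ℂ) :
    matRe (amean v A B) = amean v (matRe A) (matRe B) := by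
  simp only [matRe, amean, conjTranspose_add, conjTranspose_smul, Complex.star_def,
    Complex.conj_ofReal]
  module

lemma matIm_amean (v : ℝ) (A B : Matrix (Fin n) (Fin n) ℂ) :
    matIm (amean v A B) = amean v (matIm A) (matIm B) := by
  simp only [matIm, amean, conjTranspose_add, conjTranspose_smul, Complex.star_def,
    Complex.conj_ofReal]
  module

lemma isUnit_of_posDef_matRe {T : Matrix (Fin n) (Fin n) ℂ} (h : (matRe T).PosDef) :
    IsUnit T := by
  refine mulVec_injective_iff_isUnit.mp <|
    (injective_iff_map_eq_zero T.mulVecLin).mpr fun x hx => ?_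
  by_contra hx0
  have hT : T *ᵥ x = 0 := hx
  have : star x ⬝ᵥ matRe T *ᵥ x = 0 := by
    rw [matRe, smul_mulVec, add_mulVec, dotProduct_smul, dotProduct_add, hT, dotProduct_mulVec,
      ← star_mulVec, hT]
    simp
  exact (h.dotProduct_mulVec_pos hx0).ne' this

lemma matRe_inv {T : Matrix (Fin n) (Fin n) ℂ} (hT : IsUnit T) :
    matRe T⁻¹ = T⁻¹ * matRe T * T⁻¹ᴴ := by
  have hT' := (isUnit_iff_isUnit_det T).mp hT
  rw [matRe, matRe, Matrix.mul_smul, Matrix.smul_mul, mul_add, add_mul, nonsing_inv_mul _ hT',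
    one_mul, conjTranspose_nonsing_inv, mul_assoc, mul_nonsing_inv _ (by simpa using hT'.star),
    mul_one, add_comm]

lemma matIm_inv {T : Matrix (Fin n) (Fin n) ℂ} (hT : IsUnit T) :
    matIm T⁻¹ = -(T⁻¹ * matIm T * T⁻¹ᴴ) := by
  have hT' := (isUnit_iff_isUnit_det T).mp hT
  rw [matIm, matIm, Matrix.mul_smul, Matrix.smul_mul, mul_sub, sub_mul, nonsing_inv_mul _ hT',
    one_mul, conjTranspose_nonsing_inv, mul_assoc, mul_nonsing_inv _ (by simpa using hT'.star),
    mul_one, ← smul_neg, neg_sub]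

lemma sectorClass_iff {T : Matrix (Fin n) (Fin n) ℂ} :
    sectorClass θ T ↔ (matRe T).PosDef ∧
      -(Real.tan θ • matRe T) ≤ matIm T ∧ matIm T ≤ Real.tan θ • matRe T := by
  have hR := matRe_isHermitian T
  have hS := matIm_isHermitian T
  refine and_congr_right fun _ => ?_
  rw [le_iff, le_iff, (hS.sub (hR.smul (.all _)).neg).posSemidef_iff_re_nonneg,
    ((hR.smul (.all _)).sub hS).posSemidef_iff_re_nonneg, ← forall_and]
  refine forall_congr' fun x => ?_
  simp only [sub_neg_eq_add, sub_mulVec, add_mulVec, smul_mulVec, dotProduct_add, dotProduct_sub,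
    dotProduct_smul, Complex.add_re, Complex.sub_re, Complex.smul_re, smul_eq_mul, abs_le]
  constructor <;> rintro ⟨h₁, h₂⟩ <;> constructor <;> linarith

lemma sectorClass.inv {T : Matrix (Fin n) (Fin n) ℂ} (hT : sectorClass θ T) :
    sectorClass θ T⁻¹ := by
  obtain ⟨hR, h₁, h₂⟩ := sectorClass_iff.mp hT
  have hU := isUnit_of_posDef_matRe hR
  have hU' : IsUnit T⁻¹ := isUnit_nonsing_inv_iff.mpr hU
  rw [sectorClass_iff, matRe_inv hU, matIm_inv hU, ← star_eq_conjTranspose]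
  refine ⟨(hU'.isStrictlyPositive_star_right_conjugate_iff.mpr hR.isStrictlyPositive).posDef,
    ?_, ?_⟩
  · rw [neg_le_neg_iff]
    simpa only [mul_smul_comm, smul_mul_assoc] using star_right_conjugate_le_conjugate h₂ T⁻¹
  · rw [neg_le]
    simpa only [mul_neg, neg_mul, mul_smul_comm, smul_mul_assoc] using
      star_right_conjugate_le_conjugate h₁ T⁻¹

lemma sectorClass.amean {A B : Matrix (Fin n) (Fin n) ℂ} (hA : sectorClass θ A)
    (hB : sectorClass θ B) {v : ℝ} (hv0 : 0 ≤ v) (hv1 : v ≤ 1) :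
    sectorClass θ (amean v A B) := by
  obtain ⟨hRA, hA₁, hA₂⟩ := sectorClass_iff.mp hA
  obtain ⟨hRB, hB₁, hB₂⟩ := sectorClass_iff.mp hB
  rw [sectorClass_iff, matRe_amean, matIm_amean, amean_eq_smul_add_smul, amean_eq_smul_add_smul]
  refine ⟨(CStarAlgebra.isStrictlyPositive_smul_add_smul hRA.isStrictlyPositive
    hRB.isStrictlyPositive hv0 hv1).posDef, ?_, ?_⟩
  · convert add_le_add (smul_le_smul_of_nonneg_left hA₁ hv0)
      (smul_le_smul_of_nonneg_left hB₁ (sub_nonneg.mpr hv1)) using 1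
    module
  · convert add_le_add (smul_le_smul_of_nonneg_left hA₂ hv0)
      (smul_le_smul_of_nonneg_left hB₂ (sub_nonneg.mpr hv1)) using 1
    module

lemma add_I_smul_mul_mul_sub_I_smul {A : Type*} [Ring A] [Algebra ℂ A] {r s x : A}
    (h₁ : r * x = 1) (h₂ : x * r = 1) :
    (r + Complex.I • s) * x * (r - Complex.I • s) = r + s * x * s := by
  calc (r + Complex.I • s) * x * (r - Complex.I • s)
      = r * x * r - Complex.I • (r * x * s) + Complex.I • (s * (x * r))
        - (Complex.I * Complex.I) • (s * x * s) := by
        simp only [add_mul, mul_sub, smul_mul_assoc, mul_smul_comm, mul_assoc]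
        module
    _ = r + s * x * s := by
        simp only [h₁, h₂, one_mul, mul_one, Complex.I_mul_I]
        module

lemma inv_matRe_eq {T : Matrix (Fin n) (Fin n) ℂ} (hR : (matRe T).PosDef) :
    (matRe T)⁻¹ = matRe T⁻¹ + T⁻¹ * (matIm T * (matRe T)⁻¹ * matIm T) * T⁻¹ᴴ := by
  have hT := (isUnit_iff_isUnit_det T).mp (isUnit_of_posDef_matRe hR)
  have hR' := (isUnit_iff_isUnit_det _).mp hR.isUnit
  have key := add_I_smul_mul_mul_sub_I_smul (s := matIm T) (mul_nonsing_inv _ hR')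
    (nonsing_inv_mul _ hR')
  rw [matRe_add_I_smul_matIm, matRe_sub_I_smul_matIm] at key
  rw [matRe_inv (isUnit_of_posDef_matRe hR), ← add_mul, ← mul_add, ← key,
    conjTranspose_nonsing_inv, mul_assoc T, nonsing_inv_mul_cancel_left _ _ hT,
    mul_nonsing_inv_cancel_right _ _ (by simpa using hT.star)]

lemma matRe_inv_le_inv_matRe {T : Matrix (Fin n) (Fin n) ℂ} (hR : (matRe T).PosDef) :
    matRe T⁻¹ ≤ (matRe T)⁻¹ := by
  rw [inv_matRe_eq hR, ← star_eq_conjTranspose]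
  exact le_add_of_nonneg_right <| star_right_conjugate_nonneg
    ((isHermitian_iff_isSelfAdjoint.mp (matIm_isHermitian T)).conjugate_nonneg
      hR.inv.posSemidef.nonneg) _

lemma inv_matRe_le_smul_matRe_inv {T : Matrix (Fin n) (Fin n) ℂ} (hT : sectorClass θ T) :
    (matRe T)⁻¹ ≤ (1 + Real.tan θ ^ 2) • matRe T⁻¹ := by
  obtain ⟨hR, h₁, h₂⟩ := sectorClass_iff.mp hT
  have hSRS : matIm T * (matRe T)⁻¹ * matIm T ≤ Real.tan θ ^ 2 • matRe T := by
    simpa only [nonsing_inv_eq_ringInverse] using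
      CStarAlgebra.mul_inverse_mul_le_sq_smul hR.isStrictlyPositive h₁ h₂
  rw [inv_matRe_eq hR, add_smul, one_smul, matRe_inv (isUnit_of_posDef_matRe hR),
    ← star_eq_conjTranspose]
  gcongr
  simpa only [mul_smul_comm, smul_mul_assoc] using star_right_conjugate_le_conjugate hSRS T⁻¹

theorem matRe_amean_le_smul_matRe_hmean {A B : Matrix (Fin n) (Fin n) ℂ}
    (hA : sectorClass θ A) (hB : sectorClass θ B) {m M : ℝ} (hm : 0 < m) (hmM : m ≤ M)
    (hmA : m • 1 ≤ matRe A) (hAM : matRe A ≤ M • 1) (hmB : m • 1 ≤ matRe B)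
    (hBM : matRe B ≤ M • 1) {v : ℝ} (hv0 : 0 ≤ v) (hv1 : v ≤ 1) :
    matRe (amean v A B) ≤
      ((1 + Real.tan θ ^ 2) * ((M + m) ^ 2 / (4 * m * M))) • matRe (hmean v A B) := by
  have hM : 0 < M := hm.trans_le hmM
  set K := (M + m) ^ 2 / (4 * m * M)
  have hK : 0 ≤ K := by positivity
  set C := amean v A⁻¹ B⁻¹
  have hC : sectorClass θ C := hA.inv.amean hB.inv hv0 hv1
  have hRC : matRe C ≤ v • (matRe A)⁻¹ + (1 - v) • (matRe B)⁻¹ := by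
    rw [matRe_amean, amean_eq_smul_add_smul]
    exact add_le_add (smul_le_smul_of_nonneg_left (matRe_inv_le_inv_matRe hA.1) hv0)
      (smul_le_smul_of_nonneg_left (matRe_inv_le_inv_matRe hB.1) (sub_nonneg.mpr hv1))
  rw [← Algebra.algebraMap_eq_smul_one] at hmA hAM hmB hBM
  calc matRe (amean v A B) = v • matRe A + (1 - v) • matRe B := by
        rw [matRe_amean, amean_eq_smul_add_smul]
    _ ≤ K • (v • (matRe A)⁻¹ + (1 - v) • (matRe B)⁻¹)⁻¹ := by
        have := CStarAlgebra.smul_add_smul_le_kantorovich_smul_inverse hm hmM hmA hAM hmB hBM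
          hv0 hv1
        simpa only [nonsing_inv_eq_ringInverse] using this
    _ ≤ K • (matRe C)⁻¹ := by
        gcongr
        simpa only [nonsing_inv_eq_ringInverse] using
          CStarAlgebra.ringInverse_le_ringInverse hRC hC.1.isStrictlyPositive
    _ ≤ K • ((1 + Real.tan θ ^ 2) • matRe C⁻¹) := by
        gcongr
        exact inv_matRe_le_smul_matRe_inv hC
    _ = ((1 + Real.tan θ ^ 2) * K) • matRe (hmean v A B) := by
        rw [smul_smul, mul_comm]
        rfl

end SectorClass

lemma matRe_map_of_map_nonneg {n : ℕ}
    {Φ : Matrix (Fin n) (Fin n) ℂ →ₗ[ℂ] Matrix (Fin n) (Fin n) ℂ} (hΦ : ∀ X, 0 ≤ X → 0 ≤ Φ X)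
    (X : Matrix (Fin n) (Fin n) ℂ) : matRe (Φ X) = Φ (matRe X) := by
  rw [matRe, matRe, map_smul, map_add, ← star_eq_conjTranspose, ← star_eq_conjTranspose,
    Φ.map_star_of_map_nonneg hΦ]

theorem stmt1 {n : ℕ} (θ : ℝ) (hθ0 : 0 ≤ θ) (hθ1 : θ < Real.pi / 2)
    (A B : Matrix (Fin n) (Fin n) ℂ)
    (hA : sectorClass θ A) (hB : sectorClass θ B)
    (m M : ℝ) (hm : 0 < m) (hmM : m ≤ M)
    (hmA : loewnerLE (m • (1 : Matrix (Fin n) (Fin n) ℂ)) (matRe A))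
    (hAM : loewnerLE (matRe A) (M • (1 : Matrix (Fin n) (Fin n) ℂ)))
    (hmB : loewnerLE (m • (1 : Matrix (Fin n) (Fin n) ℂ)) (matRe B))
    (hBM : loewnerLE (matRe B) (M • (1 : Matrix (Fin n) (Fin n) ℂ)))
    (v : ℝ) (hv0 : 0 ≤ v) (hv1 : v ≤ 1)
    (Φ : Matrix (Fin n) (Fin n) ℂ →ₗ[ℂ] Matrix (Fin n) (Fin n) ℂ)
    (hΦ : IsPosUnitalMap Φ) :
    loewnerLE (matRe (Φ (amean v A B)))
      (((Real.cos θ)⁻¹ ^ 2 * ((M + m) ^ 2 / (4 * m * M))) • matRe (Φ (hmean v A B))) := by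
  have hΦ' : ∀ X, 0 ≤ X → 0 ≤ Φ X := fun X hX => (hΦ.2 X hX.posSemidef).nonneg
  have hcos : Real.cos θ ≠ 0 :=
    (Real.cos_pos_of_mem_Ioo ⟨by linarith [Real.pi_pos], hθ1⟩).ne'
  have hsec : (Real.cos θ)⁻¹ ^ 2 = 1 + Real.tan θ ^ 2 := by
    rw [inv_pow, ← Real.inv_one_add_tan_sq hcos, inv_inv]
  have key := matRe_amean_le_smul_matRe_hmean hA hB hm hmM hmA hAM hmB hBM hv0 hv1
  show matRe (Φ _) ≤ _
  rw [hsec, matRe_map_of_map_nonneg hΦ', matRe_map_of_map_nonneg hΦ',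
    ← LinearMap.map_smul_of_tower, ← sub_nonneg, ← map_sub]
  exact hΦ' _ (sub_nonneg.mpr key)
end

section
/- Let 0 ≤ θ < π/2 and let A and B be n×n complex matrices in the sector class S_θ. Then ‖A!B‖ ≤ (sec⁴θ / 2) · ‖I + A‖ · ‖I + B‖, where A!B = 2(A⁻¹ + B⁻¹)⁻¹ is the harmonic mean and ‖·‖ is the spectral norm. (This is the σ = ! instance, a mean with σ ≤ ∇, of the paper's final norm theorem.) -/
open Matrix
open scoped ComplexOrder

/-!
In a unital C⋆-algebra, `A ∈ S_θ` is the order condition `-tan θ • H ≤ G ≤ tan θ • H`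
with `H = ℜ A` strictly positive and `G = ℑ A`.
Conjugating by `H^{-1/2}` turns the hypothesis into `-tan θ ≤ u ≤ tan θ` for
`u = H^{-1/2} G H^{-1/2}`, hence `u² ≤ tan² θ` (a product of commuting positives), i.e.
`G H⁻¹ G ≤ tan² θ • H`; so `A⋆ H⁻¹ A = H + G H⁻¹ G ≤ sec² θ • H`, and conjugating by `A⁻¹`
gives `cos² θ • H⁻¹ ≤ ℜ (A⁻¹)`. As `H ≤ ‖1 + A‖ - 1`, the real part of `A⁻¹ + B⁻¹` is at least
the scalar `c = cos² θ (1/p + 1/q)` with `p = ‖1 + A‖ - 1`, `q = ‖1 + B‖ - 1`, and an element whose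
real part is at least `c > 0` is invertible with inverse of norm at most `1/c`. The bound follows
from `4pq/(p + q) ≤ (p + 1)(q + 1)`, even with `sec² θ` in place of `sec⁴ θ`.
-/

open ComplexStarModule Ring CFC

section StarAlgebra

variable {E : Type*} [Ring E] [StarRing E] [Algebra ℂ E] [StarModule ℂ E]

lemma realPart_star (x : E) : ℜ (star x) = ℜ x := by
  ext
  simp [realPart_apply_coe, add_comm]

lemma realPart_ringInverse {a : E} (ha : IsUnit a) :
    (ℜ a⁻¹ʳ : E) = star a⁻¹ʳ * ℜ a * a⁻¹ʳ := by
  have h1 : star a⁻¹ʳ * star a = 1 := by rw [← star_mul, mul_inverse_cancel _ ha, star_one]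
  rw [realPart_apply_coe, realPart_apply_coe, mul_smul_comm, smul_mul_assoc, mul_add, add_mul,
    mul_inverse_cancel_right _ _ ha, h1, one_mul, add_comm]

lemma star_mul_ringInverse_realPart_mul (a : E) (ha : IsUnit (ℜ a : E)) :
    star a * (ℜ a : E)⁻¹ʳ * a = ℜ a + ℑ a * (ℜ a : E)⁻¹ʳ * ℑ a := by
  set h : E := (ℜ a : E)
  set g : E := (ℑ a : E)
  have ha' : a = h + Complex.I • g := (realPart_add_I_smul_imaginaryPart a).symm
  have hstar : star a = h - Complex.I • g := by
    rw [ha', star_add, star_smul, (ℜ a).2.star_eq, (ℑ a).2.star_eq, Complex.star_def,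
      Complex.conj_I, neg_smul, sub_eq_add_neg]
  rw [hstar, ha']
  simp only [sub_mul, mul_add, smul_mul_assoc, mul_smul_comm, mul_inverse_cancel _ ha,
    inverse_mul_cancel_right _ _ ha, one_mul]
  rw [smul_sub, smul_smul, Complex.I_mul_I]
  module

end StarAlgebra

section CStarAlgebra

variable {A : Type*} [CStarAlgebra A] [PartialOrder A] [StarOrderedRing A]

/-- The sector class `S_θ` with `t = tan θ`: `ℜ a > 0` and `|⟨(ℑ a) x, x⟩| ≤ t ⟨(ℜ a) x, x⟩`
for all `x`, written as an inequality in the order of the algebra. -/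
def IsSectorial (t : ℝ) (a : A) : Prop :=
  IsStrictlyPositive (ℜ a : A) ∧ -(t • (ℜ a : A)) ≤ ℑ a ∧ (ℑ a : A) ≤ t • ℜ a

lemma algebraMap_sq_le_star_mul_self_of_le_realPart {x : A} {c : ℝ} (hc : 0 ≤ c)
    (hx : algebraMap ℝ A c ≤ ℜ x) : algebraMap ℝ A (c ^ 2) ≤ star x * x := by
  have key : star x * x - algebraMap ℝ A (c ^ 2) =
      star (x - algebraMap ℝ A c) * (x - algebraMap ℝ A c) +
        (2 * c) • ((ℜ x : A) - algebraMap ℝ A c) := by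
    simp only [realPart_apply_coe, Algebra.algebraMap_eq_smul_one, star_sub, star_smul, star_one,
      star_trivial, sub_mul, mul_sub, smul_mul_assoc, mul_smul_comm, one_mul, mul_one]
    module
  rw [← sub_nonneg, key]
  exact add_nonneg (star_mul_self_nonneg _) (smul_nonneg (by positivity) (sub_nonneg.mpr hx))

lemma isUnit_of_algebraMap_le_realPart {x : A} {c : ℝ} (hc : 0 < c)
    (hx : algebraMap ℝ A c ≤ ℜ x) : IsUnit x := by
  have hc2 : IsStrictlyPositive (algebraMap ℝ A (c ^ 2)) :=
    isStrictlyPositive_algebraMap (by positivity)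
  have hL : IsUnit (star x * x) :=
    (hc2.of_le (algebraMap_sq_le_star_mul_self_of_le_realPart hc.le hx)).isUnit
  have hR : IsUnit (x * star x) := by
    have := algebraMap_sq_le_star_mul_self_of_le_realPart (x := star x) hc.le
      (by rwa [realPart_star])
    rw [star_star] at this
    exact (hc2.of_le this).isUnit
  refine isUnit_iff_exists_and_exists.mpr
    ⟨⟨star x * (x * star x)⁻¹ʳ, ?_⟩, ⟨(star x * x)⁻¹ʳ * star x, ?_⟩⟩
  · rw [← mul_assoc, mul_inverse_cancel _ hR]
  · rw [mul_assoc, inverse_mul_cancel _ hL]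

lemma norm_ringInverse_le_of_algebraMap_le_realPart {x : A} {c : ℝ} (hc : 0 < c)
    (hx : algebraMap ℝ A c ≤ ℜ x) : ‖x⁻¹ʳ‖ ≤ c⁻¹ := by
  have hu := isUnit_of_algebraMap_le_realPart hc hx
  set y := x⁻¹ʳ
  have hconj := star_left_conjugate_le_conjugate
    (algebraMap_sq_le_star_mul_self_of_le_realPart hc.le hx) y
  have hone : star y * (star x * x) * y = 1 := by
    rw [mul_assoc, mul_assoc, mul_inverse_cancel _ hu, mul_one, ← star_mul,
      mul_inverse_cancel _ hu, star_one]
  rw [hone, Algebra.algebraMap_eq_smul_one, mul_smul_comm, smul_mul_assoc, mul_one] at hconj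
  have hle : star y * y ≤ algebraMap ℝ A ((c ^ 2)⁻¹) := by
    rw [Algebra.algebraMap_eq_smul_one]
    have := smul_le_smul_of_nonneg_left hconj (inv_nonneg.mpr (sq_nonneg c))
    rwa [smul_smul, inv_mul_cancel₀ (by positivity), one_smul] at this
  rw [← CStarAlgebra.norm_le_iff_le_algebraMap _ (by positivity) (star_mul_self_nonneg y),
    CStarRing.norm_star_mul_self, ← sq, ← inv_pow] at hle
  exact (pow_le_pow_iff_left₀ (norm_nonneg _) (by positivity) two_ne_zero).mp hle

lemma mul_ringInverse_mul_le_of_neg_le_of_le {h g : A} {t : ℝ} (hh : IsStrictlyPositive h)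
    (hlo : -(t • h) ≤ g) (hhi : g ≤ t • h) : g * h⁻¹ʳ * g ≤ t ^ 2 • h := by
  set u := conjSqrt h⁻¹ʳ g
  have hconj : ∀ s : ℝ, conjSqrt h⁻¹ʳ (s • h) = algebraMap ℝ A s := fun s => by
    rw [map_smul, conjSqrt_ringInverse_self h, Algebra.algebraMap_eq_smul_one]
  have hu_lo : 0 ≤ algebraMap ℝ A t + u := by
    have := conjSqrt_le_conjSqrt (c := h⁻¹ʳ) hlo
    rw [map_neg, hconj] at this
    exact neg_le_iff_add_nonneg'.mp this
  have hu_hi : 0 ≤ algebraMap ℝ A t - u := by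
    have := conjSqrt_le_conjSqrt (c := h⁻¹ʳ) hhi
    rw [hconj] at this
    exact sub_nonneg.mpr this
  have hsq : u * u ≤ algebraMap ℝ A (t ^ 2) := by
    have hcomm : Commute (algebraMap ℝ A t - u) (algebraMap ℝ A t + u) :=
      (Algebra.commute_algebraMap_left t _).sub_left
        ((Algebra.commute_algebraMap_right t u).add_right (Commute.refl u))
    have hexp : (algebraMap ℝ A t - u) * (algebraMap ℝ A t + u) =
        algebraMap ℝ A (t ^ 2) - u * u := by
      rw [sub_mul, mul_add, mul_add, Algebra.commutes t u, map_pow, sq]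
      abel
    exact sub_nonneg.mp (hexp ▸ Commute.mul_nonneg hu_hi hu_lo hcomm)
  have hmid : sqrt h * h⁻¹ʳ * sqrt h = 1 := by
    have := conjSqrt_ringInverse_self h⁻¹ʳ hh.ringInverse
    rwa [inverse_inverse hh.isUnit, conjSqrt_apply] at this
  have hgg : g * h⁻¹ʳ * g = conjSqrt h (u * u) := by
    rw [← conjSqrt_conjSqrt_ringInverse h g, conjSqrt_apply, conjSqrt_apply]
    calc sqrt h * u * sqrt h * h⁻¹ʳ * (sqrt h * u * sqrt h)
        = sqrt h * u * (sqrt h * h⁻¹ʳ * sqrt h) * u * sqrt h := by noncomm_ring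
      _ = sqrt h * (u * u) * sqrt h := by rw [hmid]; noncomm_ring
  calc g * h⁻¹ʳ * g = conjSqrt h (u * u) := hgg
    _ ≤ conjSqrt h (algebraMap ℝ A (t ^ 2)) := conjSqrt_le_conjSqrt hsq
    _ = t ^ 2 • h := by rw [Algebra.algebraMap_eq_smul_one, map_smul, conjSqrt_one h hh.nonneg]

lemma realPart_le_algebraMap_norm_one_add_sub_one (a : A) :
    (ℜ a : A) ≤ algebraMap ℝ A (‖1 + a‖ - 1) := by
  have h1 : (ℜ (1 + a) : A) ≤ algebraMap ℝ A ‖1 + a‖ :=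
    (ℜ (1 + a)).2.le_algebraMap_norm_self.trans (algebraMap_mono A (realPart.norm_le (1 + a)))
  rw [map_add, realPart_one, AddSubgroup.coe_add, selfAdjoint.val_one] at h1
  rwa [map_sub, map_one, le_sub_iff_add_le']

lemma algebraMap_inv_le_ringInverse {h : A} {p : ℝ} (hh : IsStrictlyPositive h) (hp : 0 < p)
    (hle : h ≤ algebraMap ℝ A p) : algebraMap ℝ A p⁻¹ ≤ h⁻¹ʳ := by
  have hinv : (algebraMap ℝ A p)⁻¹ʳ = algebraMap ℝ A p⁻¹ := by
    rw [← mul_one (algebraMap ℝ A p)⁻¹ʳ,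
      inverse_mul_eq_iff_eq_mul _ _ _ (isStrictlyPositive_algebraMap hp).isUnit, ← map_mul,
      mul_inv_cancel₀ hp.ne', map_one]
  exact hinv ▸ CStarAlgebra.ringInverse_le_ringInverse hle hh

namespace IsSectorial

variable {t : ℝ} {a : A}

lemma isUnit (ha : IsSectorial t a) : IsUnit a := by
  nontriviality A
  obtain ⟨c, hc, hle⟩ := (CFC.exists_pos_algebraMap_le_iff ha.1.isSelfAdjoint).mpr
    fun _ hx => ha.1.spectrum_pos hx
  exact isUnit_of_algebraMap_le_realPart hc hle

lemma ringInverse_realPart_le (ha : IsSectorial t a) :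
    (ℜ a : A)⁻¹ʳ ≤ (1 + t ^ 2) • (ℜ a⁻¹ʳ : A) := by
  have hu := ha.isUnit
  have hform : star a * (ℜ a : A)⁻¹ʳ * a ≤ (1 + t ^ 2) • (ℜ a : A) := by
    rw [star_mul_ringInverse_realPart_mul a ha.1.isUnit, add_smul, one_smul]
    gcongr
    exact mul_ringInverse_mul_le_of_neg_le_of_le ha.1 ha.2.1 ha.2.2
  have hcancel : star a⁻¹ʳ * (star a * (ℜ a : A)⁻¹ʳ * a) * a⁻¹ʳ = (ℜ a : A)⁻¹ʳ := by
    rw [← mul_assoc, mul_inverse_cancel_right _ _ hu, ← mul_assoc, ← star_mul,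
      mul_inverse_cancel _ hu, star_one, one_mul]
  have := star_left_conjugate_le_conjugate hform a⁻¹ʳ
  rwa [hcancel, mul_smul_comm, smul_mul_assoc, ← realPart_ringInverse hu] at this

lemma one_lt_norm_one_add [Nontrivial A] (ha : IsSectorial t a) : 1 < ‖1 + a‖ := by
  have := (ha.1.of_le (realPart_le_algebraMap_norm_one_add_sub_one a)).spectrum_pos
    (by rw [spectrum.scalar_eq]; rfl)
  linarith

lemma algebraMap_le_realPart_ringInverse [Nontrivial A] (ha : IsSectorial t a) :
    algebraMap ℝ A ((1 + t ^ 2)⁻¹ * (‖1 + a‖ - 1)⁻¹) ≤ ℜ a⁻¹ʳ := by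
  have hlow := algebraMap_inv_le_ringInverse ha.1 (sub_pos.mpr ha.one_lt_norm_one_add)
    (realPart_le_algebraMap_norm_one_add_sub_one a)
  have ht : 0 < 1 + t ^ 2 := by positivity
  calc algebraMap ℝ A ((1 + t ^ 2)⁻¹ * (‖1 + a‖ - 1)⁻¹)
      = (1 + t ^ 2)⁻¹ • algebraMap ℝ A (‖1 + a‖ - 1)⁻¹ := by rw [map_mul, ← Algebra.smul_def]
    _ ≤ (1 + t ^ 2)⁻¹ • (ℜ a : A)⁻¹ʳ := by gcongr
    _ ≤ (1 + t ^ 2)⁻¹ • (1 + t ^ 2) • (ℜ a⁻¹ʳ : A) := by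
      gcongr
      exact ha.ringInverse_realPart_le
    _ = ℜ a⁻¹ʳ := by rw [smul_smul, inv_mul_cancel₀ ht.ne', one_smul]

theorem norm_two_smul_ringInverse_add_le {b : A} (ha : IsSectorial t a)
    (hb : IsSectorial t b) :
    ‖(2 : ℂ) • (a⁻¹ʳ + b⁻¹ʳ)⁻¹ʳ‖ ≤ (1 + t ^ 2) / 2 * (‖1 + a‖ * ‖1 + b‖) := by
  nontriviality A
  have hp := sub_pos.mpr ha.one_lt_norm_one_add
  have hq := sub_pos.mpr hb.one_lt_norm_one_add
  set p := ‖1 + a‖ - 1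
  set q := ‖1 + b‖ - 1
  have hre : algebraMap ℝ A ((1 + t ^ 2)⁻¹ * (p⁻¹ + q⁻¹)) ≤ ℜ (a⁻¹ʳ + b⁻¹ʳ) := by
    rw [mul_add, map_add, map_add, AddSubgroup.coe_add]
    exact add_le_add ha.algebraMap_le_realPart_ringInverse hb.algebraMap_le_realPart_ringInverse
  have hnorm := norm_ringInverse_le_of_algebraMap_le_realPart (by positivity) hre
  have hab : ‖1 + a‖ * ‖1 + b‖ = (p + 1) * (q + 1) := by simp [p, q]
  rw [norm_smul, Complex.norm_two, hab]
  calc 2 * ‖(a⁻¹ʳ + b⁻¹ʳ)⁻¹ʳ‖ ≤ 2 * ((1 + t ^ 2)⁻¹ * (p⁻¹ + q⁻¹))⁻¹ := by gcongr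
    _ ≤ (1 + t ^ 2) / 2 * ((p + 1) * (q + 1)) := by
      field_simp
      nlinarith [sq_nonneg (p - q), mul_pos hp hq, sq_nonneg t]

end IsSectorial

end CStarAlgebra

lemma Matrix.PosSemidef.of_re_dotProduct_mulVec_nonneg {𝕜 m : Type*} [RCLike 𝕜] [Fintype m]
    {M : Matrix m m 𝕜} (hM : M.IsHermitian) (h : ∀ x, 0 ≤ RCLike.re (star x ⬝ᵥ M *ᵥ x)) :
    M.PosSemidef :=
  .of_dotProduct_mulVec_nonneg hM fun x =>
    RCLike.nonneg_iff.mpr ⟨h x, hM.im_star_dotProduct_mulVec_self x⟩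

open scoped Matrix.Norms.L2Operator MatrixOrder

section SectorClass

variable {n : ℕ}

lemma coe_realPart_eq_matRe (A : Matrix (Fin n) (Fin n) ℂ) :
    (ℜ A : Matrix (Fin n) (Fin n) ℂ) = matRe A := by
  rw [realPart_apply_coe, matRe, ← Complex.coe_smul, star_eq_conjTranspose]
  norm_num

lemma coe_imaginaryPart_eq_matIm (A : Matrix (Fin n) (Fin n) ℂ) :
    (ℑ A : Matrix (Fin n) (Fin n) ℂ) = matIm A := by
  rw [imaginaryPart_apply_coe, matIm, ← Complex.coe_smul, smul_smul]
  congr 1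
  simp [Complex.inv_I]

lemma sectorClass.isSectorial {θ : ℝ} {A : Matrix (Fin n) (Fin n) ℂ} (hA : sectorClass θ A) :
    IsSectorial (Real.tan θ) A := by
  obtain ⟨hpos, hbound⟩ := hA
  rw [← coe_realPart_eq_matRe] at hpos hbound
  rw [← coe_imaginaryPart_eq_matIm] at hbound
  have hH : (ℜ A : Matrix (Fin n) (Fin n) ℂ).IsHermitian := (ℜ A).2
  have hG : (ℑ A : Matrix (Fin n) (Fin n) ℂ).IsHermitian := (ℑ A).2
  refine ⟨hpos.isStrictlyPositive, ?_, ?_⟩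
  · rw [Matrix.le_iff, sub_neg_eq_add]
    refine .of_re_dotProduct_mulVec_nonneg (hG.add (hH.smul (.all _))) fun x => ?_
    simp only [Matrix.add_mulVec, Matrix.smul_mulVec, dotProduct_add, dotProduct_smul, map_add,
      RCLike.smul_re, RCLike.re_to_complex]
    linarith [(abs_le.mp (hbound x)).1]
  · rw [Matrix.le_iff]
    refine .of_re_dotProduct_mulVec_nonneg ((hH.smul (.all _)).sub hG) fun x => ?_
    simp only [Matrix.sub_mulVec, Matrix.smul_mulVec, dotProduct_sub, dotProduct_smul, map_sub,
      RCLike.smul_re, RCLike.re_to_complex]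
    linarith [(abs_le.mp (hbound x)).2]

end SectorClass

theorem stmt15 {n : ℕ} (θ : ℝ) (hθ0 : 0 ≤ θ) (hθ1 : θ < Real.pi / 2)
    (A B : Matrix (Fin n) (Fin n) ℂ)
    (hA : sectorClass θ A) (hB : sectorClass θ B) :
    matSpectralNorm ((2 : ℂ) • (A⁻¹ + B⁻¹)⁻¹) ≤
      (Real.cos θ)⁻¹ ^ 4 / 2 * (matSpectralNorm (1 + A) * matSpectralNorm (1 + B)) := by
  have hcos : 0 < Real.cos θ := Real.cos_pos_of_mem_Ioo ⟨by linarith [Real.pi_pos], hθ1⟩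
  have hsec : 1 + Real.tan θ ^ 2 ≤ (Real.cos θ)⁻¹ ^ 4 := by
    rw [← inv_inv (1 + _), Real.inv_one_add_tan_sq hcos.ne', ← inv_pow]
    exact pow_le_pow_right₀ ((one_le_inv₀ hcos).mpr (Real.cos_le_one θ)) (by norm_num)
  simp only [matSpectralNorm, ← Matrix.cstar_norm_def, Matrix.nonsing_inv_eq_ringInverse]
  calc _ ≤ _ := hA.isSectorial.norm_two_smul_ringInverse_add_le hB.isSectorial
    _ ≤ _ := by gcongr
end

section
/- Let 0 ≤ θ < π/2 and let A be an n×n complex matrix in the sector class S_θ. Then ℜ(A⁻¹) ≤ (ℜA)⁻¹ ≤ sec²θ · ℜ(A⁻¹) in the Loewner order. (In particular ℜ(A⁻¹) is positive definite, so all three matrices are Hermitian and the inequalities compare positive definite matrices.) -/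
open Matrix
open scoped ComplexOrder

/-! Write `R = ℜA`, `S = ℑA`. Then `A R⁻¹ Aᴴ = R + S R⁻¹ S` and `ℜ(A⁻¹) = A⁻¹ R A⁻¹ᴴ`, so
`(ℜA)⁻¹ = ℜ(A⁻¹) + A⁻¹ (S R⁻¹ S) A⁻¹ᴴ`. The first inequality is `0 ≤ S R⁻¹ S`; the second,
after `sec² θ = 1 + tan² θ`, is `S R⁻¹ S ≤ tan² θ • R`, which follows from the sector bound
`|⟨Sx, x⟩| ≤ tan θ ⟨Rx, x⟩` by polarizing it between `x` and multiples of `R⁻¹ S x`. -/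

open Complex

section QuadraticForms

variable {ι : Type*} [Fintype ι]

lemma Matrix.IsHermitian.star_dotProduct_mulVec {S : Matrix ι ι ℂ} (hS : S.IsHermitian)
    (x y : ι → ℂ) : star (star x ⬝ᵥ S *ᵥ y) = star y ⬝ᵥ S *ᵥ x := by
  rw [star_dotProduct, star_star, dotProduct_mulVec, star_mulVec, hS.eq]

lemma two_mul_re_dotProduct_mulVec_le {R S : Matrix ι ι ℂ} (hS : S.IsHermitian) {t : ℝ}
    (h : ∀ x, |(star x ⬝ᵥ S *ᵥ x).re| ≤ t * (star x ⬝ᵥ R *ᵥ x).re) (x y : ι → ℂ) :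
    2 * (star x ⬝ᵥ S *ᵥ y).re ≤ t * ((star x ⬝ᵥ R *ᵥ x).re + (star y ⬝ᵥ R *ᵥ y).re) := by
  have hsum := (abs_le.mp (h (x + y))).2
  have hdiff := (abs_le.mp (h (x - y))).1
  have hyx : (star y ⬝ᵥ S *ᵥ x).re = (star x ⬝ᵥ S *ᵥ y).re := by
    rw [← hS.star_dotProduct_mulVec, Complex.star_def, conj_re]
  simp only [star_add, star_sub, mulVec_add, mulVec_sub, dotProduct_add, add_dotProduct,
    dotProduct_sub, sub_dotProduct, add_re, sub_re, hyx] at hsum hdiff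
  linarith

lemma le_sq_mul_of_forall_two_mul_le {p q t : ℝ} (hp : 0 ≤ p) (hq : 0 ≤ q)
    (h : ∀ l : ℝ, 2 * l * q ≤ t * (p + l ^ 2 * q)) : q ≤ t ^ 2 * p := by
  rcases le_or_gt t 0 with ht | ht
  · nlinarith [h 1]
  · have := h t⁻¹
    field_simp at this
    nlinarith

variable [DecidableEq ι]

theorem Matrix.PosDef.posSemidef_sq_smul_sub_mul_inv_mul {R S : Matrix ι ι ℂ} (hR : R.PosDef)
    (hS : S.IsHermitian) {t : ℝ}
    (h : ∀ x, |(star x ⬝ᵥ S *ᵥ x).re| ≤ t * (star x ⬝ᵥ R *ᵥ x).re) :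
    ((t ^ 2) • R - S * R⁻¹ * S).PosSemidef := by
  have hRinv : R * R⁻¹ = 1 := mul_nonsing_inv R ((isUnit_iff_isUnit_det R).mp hR.isUnit)
  have hherm : ((t ^ 2) • R - S * R⁻¹ * S).IsHermitian := by
    refine (hR.isHermitian.smul (IsSelfAdjoint.all _)).sub ?_
    simpa only [hS.eq] using isHermitian_conjTranspose_mul_mul S hR.inv.isHermitian
  refine .of_dotProduct_mulVec_nonneg hherm fun x => ?_
  rw [RCLike.nonneg_iff (K := ℂ)]
  refine ⟨?_, hherm.im_star_dotProduct_mulVec_self x⟩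
  -- test with `y = R⁻¹ S x`, the maximiser of `2 Re ⟨Sx, y⟩ - ⟨Ry, y⟩`
  set y := R⁻¹ *ᵥ S *ᵥ x
  set p := (star x ⬝ᵥ R *ᵥ x).re
  set q := (star x ⬝ᵥ S *ᵥ y).re
  have hform : RCLike.re (star x ⬝ᵥ ((t ^ 2) • R - S * R⁻¹ * S) *ᵥ x) = t ^ 2 * p - q := by
    simp only [sub_mulVec, dotProduct_sub, smul_mulVec, dotProduct_smul, ← mulVec_mulVec,
      RCLike.re_to_complex, sub_re, Complex.real_smul, re_ofReal_mul, y, p, q]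
  have hp : 0 ≤ p := hR.posSemidef.re_dotProduct_nonneg x
  have hq : 0 ≤ q := by
    simpa [q, y, dotProduct_mulVec, star_mulVec, hS.eq] using
      hR.inv.posSemidef.re_dotProduct_nonneg (S *ᵥ x)
  have hRy : (star y ⬝ᵥ R *ᵥ y).re = q := by
    rw [mulVec_mulVec, hRinv, one_mulVec, ← hS.star_dotProduct_mulVec, Complex.star_def,
      conj_re]
  have hpol (l : ℝ) : 2 * l * q ≤ t * (p + l ^ 2 * q) := by
    have := two_mul_re_dotProduct_mulVec_le hS h x ((l : ℂ) • y)
    simp only [mulVec_smul, star_smul, dotProduct_smul, smul_dotProduct, Complex.star_def,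
      conj_ofReal, smul_eq_mul, re_ofReal_mul, hRy] at this
    linear_combination this
  rw [hform, sub_nonneg]
  exact le_sq_mul_of_forall_two_mul_le hp hq hpol

lemma add_I_smul_mul_inv_mul_conjTranspose {R S : Matrix ι ι ℂ} (hR : R.IsHermitian)
    (hS : S.IsHermitian) (hRu : IsUnit R.det) :
    (R + I • S) * R⁻¹ * (R + I • S)ᴴ = R + S * R⁻¹ * S := by
  have hI : star I = -I := by simp
  simp only [conjTranspose_add, conjTranspose_smul, hR.eq, hS.eq, hI, add_mul, mul_add,
    smul_mul_assoc, mul_smul_comm, mul_assoc, mul_nonsing_inv _ hRu, nonsing_inv_mul _ hRu,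
    mul_one, one_mul]
  match_scalars <;> simp

end QuadraticForms

open scoped ComplexStarModule

section MatrixRealPart

variable {n : ℕ} (A : Matrix (Fin n) (Fin n) ℂ)

lemma matRe_eq_realPart : matRe A = ℜ A := by
  rw [matRe, realPart_apply_coe, ← Complex.coe_smul, star_eq_conjTranspose]
  norm_num

lemma matIm_eq_imaginaryPart : matIm A = ℑ A := by
  rw [matIm, imaginaryPart_apply_coe, ← Complex.coe_smul, star_eq_conjTranspose, smul_smul]
  congr 1
  field_simp
  simp [I_sq]

lemma matRe_isHermitian_s18 : (matRe A).IsHermitian := by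
  rw [matRe_eq_realPart]
  exact (ℜ A).2.isHermitian

lemma matIm_isHermitian_s18 : (matIm A).IsHermitian := by
  rw [matIm_eq_imaginaryPart]
  exact (ℑ A).2.isHermitian

lemma matRe_add_I_smul_matIm_s18 : matRe A + I • matIm A = A := by
  rw [matRe_eq_realPart, matIm_eq_imaginaryPart, realPart_add_I_smul_imaginaryPart]

lemma isUnit_det_of_posDef_matRe (hR : (matRe A).PosDef) : IsUnit A.det := by
  refine isUnit_iff_ne_zero.mpr fun hdet => ?_
  obtain ⟨x, hx, hAx⟩ := exists_mulVec_eq_zero_iff.mpr hdet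
  have hAHx : star x ⬝ᵥ Aᴴ *ᵥ x = 0 := by
    rw [dotProduct_mulVec, ← star_mulVec, hAx, star_zero, zero_dotProduct]
  have := hR.dotProduct_mulVec_pos hx
  rw [matRe, smul_mulVec, add_mulVec, dotProduct_smul, dotProduct_add, hAx, dotProduct_zero,
    hAHx, add_zero, smul_zero] at this
  exact this.false

variable {A}

lemma matRe_inv_s18 (hA : IsUnit A.det) : matRe A⁻¹ = A⁻¹ * matRe A * A⁻¹ᴴ := by
  have hAH : IsUnit Aᴴ.det := by simpa using hA.star
  simp only [matRe, conjTranspose_nonsing_inv, mul_smul_comm, smul_mul_assoc, mul_add, add_mul,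
    nonsing_inv_mul _ hA, one_mul, mul_assoc, mul_nonsing_inv _ hAH, mul_one, add_comm]

lemma inv_matRe_eq_matRe_inv_add (hA : IsUnit A.det) (hR : IsUnit (matRe A).det) :
    (matRe A)⁻¹ = matRe A⁻¹ + A⁻¹ * (matIm A * (matRe A)⁻¹ * matIm A) * A⁻¹ᴴ := by
  have hAH : IsUnit Aᴴ.det := by simpa using hA.star
  have hconj : A * (matRe A)⁻¹ * Aᴴ = matRe A + matIm A * (matRe A)⁻¹ * matIm A := by
    simpa only [matRe_add_I_smul_matIm_s18] using
      add_I_smul_mul_inv_mul_conjTranspose (matRe_isHermitian_s18 A) (matIm_isHermitian_s18 A) hR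
  calc (matRe A)⁻¹ = A⁻¹ * (A * (matRe A)⁻¹ * Aᴴ) * A⁻¹ᴴ := by
        rw [conjTranspose_nonsing_inv]
        simp only [← mul_assoc, nonsing_inv_mul _ hA, one_mul]
        rw [mul_assoc, mul_nonsing_inv _ hAH, mul_one]
    _ = _ := by rw [hconj, mul_add, add_mul, ← matRe_inv_s18 hA]

theorem matRe_inv_loewnerLE_inv_matRe (hR : (matRe A).PosDef) :
    loewnerLE (matRe A⁻¹) (matRe A)⁻¹ := by
  have hSRS : (matIm A * (matRe A)⁻¹ * matIm A).PosSemidef := by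
    simpa only [(matIm_isHermitian_s18 A).eq] using
      hR.inv.posSemidef.conjTranspose_mul_mul_same (matIm A)
  rw [loewnerLE, inv_matRe_eq_matRe_inv_add (isUnit_det_of_posDef_matRe A hR)
    ((isUnit_iff_isUnit_det _).mp hR.isUnit), add_sub_cancel_left]
  exact hSRS.mul_mul_conjTranspose_same A⁻¹

theorem inv_matRe_loewnerLE_one_add_sq_smul_matRe_inv (hR : (matRe A).PosDef) {t : ℝ}
    (h : ∀ x, |(star x ⬝ᵥ matIm A *ᵥ x).re| ≤ t * (star x ⬝ᵥ matRe A *ᵥ x).re) :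
    loewnerLE (matRe A)⁻¹ ((1 + t ^ 2) • matRe A⁻¹) := by
  have hA := isUnit_det_of_posDef_matRe A hR
  have hkey := hR.posSemidef_sq_smul_sub_mul_inv_mul (matIm_isHermitian_s18 A) h
  rw [loewnerLE, inv_matRe_eq_matRe_inv_add hA ((isUnit_iff_isUnit_det _).mp hR.isUnit),
    matRe_inv_s18 hA]
  convert hkey.mul_mul_conjTranspose_same A⁻¹ using 1
  rw [mul_sub, sub_mul, mul_smul_comm, smul_mul_assoc]
  module

end MatrixRealPart

theorem stmt18 {n : ℕ} (θ : ℝ) (hθ0 : 0 ≤ θ) (hθ1 : θ < Real.pi / 2)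
    (A : Matrix (Fin n) (Fin n) ℂ) (hA : sectorClass θ A) :
    loewnerLE (matRe A⁻¹) (matRe A)⁻¹ ∧
      loewnerLE ((matRe A)⁻¹) (((Real.cos θ)⁻¹ ^ 2) • matRe A⁻¹) := by
  obtain ⟨hR, hsector⟩ := hA
  have hcos : Real.cos θ ≠ 0 :=
    (Real.cos_pos_of_mem_Ioo ⟨by linarith [Real.pi_pos], hθ1⟩).ne'
  have hsec_sq : (Real.cos θ)⁻¹ ^ 2 = 1 + Real.tan θ ^ 2 := by
    rw [inv_pow, ← Real.inv_one_add_tan_sq hcos, inv_inv]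
  rw [hsec_sq]
  exact ⟨matRe_inv_loewnerLE_inv_matRe hR,
    inv_matRe_loewnerLE_one_add_sq_smul_matRe_inv hR hsector⟩
end
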